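/- If ρ is order-preserving on every inversion of σ (i.e., ρ(i) < ρ(j) for all (i,j) ∈ E(σ)), then the image ρ ∗ E(σ) satisfies the transitivity condition: whenever k < l < m with (k,l), (l,m) ∈ ρ ∗ E(σ), also (k,m) ∈ ρ ∗ E(σ). -/
import Mathlib


/-- The inversion set of a permutation `π`: pairs `(i,j)` with `i < j` and `π⁻¹ i > π⁻¹ j`. -/
def invSet {n : ℕ} (π : Equiv.Perm (Fin n)) : Set (Fin n × Fin n) :=
  {p | p.1 < p.2 ∧ π⁻¹ p.2 < π⁻¹ p.1}

/-- The reverse of `π`, i.e. `π^c (k) = π (n+1-k)` in one-based terms. -/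
def revc {n : ℕ} (π : Equiv.Perm (Fin n)) : Equiv.Perm (Fin n) :=
  Fin.revPerm.trans π

/-- The action of `ρ` on a pair, reordering the images increasingly. -/
def act {n : ℕ} (ρ : Equiv.Perm (Fin n)) (p : Fin n × Fin n) : Fin n × Fin n :=
  if ρ p.1 < ρ p.2 then (ρ p.1, ρ p.2) else (ρ p.2, ρ p.1)

theorem stmt_10 {n : ℕ} (σ ρ : Equiv.Perm (Fin n))
    (hop : ∀ p ∈ invSet σ, ρ p.1 < ρ p.2) (k l m : Fin n)
    (h1 : k < l) (h2 : l < m)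
    (hkl : (k, l) ∈ act ρ '' invSet σ) (hlm : (l, m) ∈ act ρ '' invSet σ) :
    (k, m) ∈ act ρ '' invSet σ := by
  obtain ⟨⟨a, b⟩, hab, hab'⟩ := hkl
  obtain ⟨⟨c, d⟩, hcd, hcd'⟩ := hlm
  have h1 : ρ a < ρ b := hop _ hab
  have h2 : ρ c < ρ d := hop _ hcd
  simp only [act, if_pos h1, Prod.mk.injEq] at hab'
  simp only [act, if_pos h2, Prod.mk.injEq] at hcd'
  obtain ⟨rfl, rfl⟩ := hab'
  obtain ⟨hl, rfl⟩ := hcd'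
  have hbc : b = c := (ρ.injective hl).symm
  subst hbc
  have had : (a, d) ∈ invSet σ :=
    ⟨hab.1.trans hcd.1, hcd.2.trans hab.2⟩
  refine ⟨(a, d), had, ?_⟩
  simp [act, hop _ had]
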